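/- arXiv:2111.03169 — 2 statements merged into one kernel-verified Lean document; each statement's English description precedes it below -/
import Mathlib

section
/- The entropy-regularized optimal transport cost between a distribution and itself is strictly positive when the cost function is c(x,y) = (1/2)‖f(x) − f(y)‖² with f non-constant on the support of μ: min over couplings P of (μ,μ) of E_P[c] + ε·KL(P ‖ μ⊗μ) > 0 for any ε > 0. -/
/-!
By Gibbs' inequality `p log (p / q) ≥ p - q`, and since both `P` and `μ ⊗ μ` have total mass one,
the KL term is nonnegative and at least `(μ ⊗ μ)(x₁, x₂)` when `P` puts no mass on `(x₁, x₂)`.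
If instead `P (x₁, x₂) > 0`, the transport cost is already positive because `f x₁ ≠ f x₂`.
-/

open RealInnerProductSpace

/-- A coupling of `(μ, μ)` on a finite space. -/
def IsCoupling {X : Type*} [Fintype X] (μ : X → ℝ) (π : X × X → ℝ) : Prop :=
  (∀ p, 0 ≤ π p) ∧ (∀ x, ∑ y, π (x, y) = μ x) ∧ (∀ y, ∑ x, π (x, y) = μ y)

/-- KL divergence between finite distributions. -/
noncomputable def klDiv {Y : Type*} [Fintype Y] (P Q : Y → ℝ) : ℝ :=
  ∑ y, if P y = 0 then 0 else P y * Real.log (P y / Q y)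

open Finset Real

lemma sub_le_mul_log_div {p q : ℝ} (hp : 0 < p) (hq : 0 < q) : p - q ≤ p * log (p / q) := by
  have h := mul_le_mul_of_nonneg_left (one_sub_inv_le_log_of_pos (div_pos hp hq)) hp.le
  rwa [inv_div, mul_sub, mul_one, mul_div_cancel₀ _ hp.ne'] at h

section klDiv

variable {Y : Type*} [Fintype Y] {P Q : Y → ℝ}

lemma klDiv_summand_add_sub_nonneg {p q : ℝ} (hp : 0 ≤ p) (hq : 0 ≤ q) (hpq : q = 0 → p = 0) :
    0 ≤ (if p = 0 then 0 else p * log (p / q)) + (q - p) := by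
  by_cases hp0 : p = 0
  · simpa [hp0] using hq
  · have hq0 : 0 < q := hq.lt_of_ne fun h => hp0 (hpq h.symm)
    rw [if_neg hp0]
    linarith [sub_le_mul_log_div (hp.lt_of_ne (Ne.symm hp0)) hq0]

lemma klDiv_eq_sum_add_sub (hsum : ∑ y, P y = ∑ y, Q y) :
    klDiv P Q = ∑ y, ((if P y = 0 then 0 else P y * log (P y / Q y)) + (Q y - P y)) := by
  rw [sum_add_distrib, sum_sub_distrib, hsum, sub_self, add_zero, klDiv]

variable (hP : ∀ y, 0 ≤ P y) (hQ : ∀ y, 0 ≤ Q y) (hPQ : ∀ y, Q y = 0 → P y = 0)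
  (hsum : ∑ y, P y = ∑ y, Q y)
include hP hQ hPQ hsum

lemma klDiv_nonneg : 0 ≤ klDiv P Q := by
  rw [klDiv_eq_sum_add_sub hsum]
  exact sum_nonneg fun y _ => klDiv_summand_add_sub_nonneg (hP y) (hQ y) (hPQ y)

lemma le_klDiv_of_eq_zero {y : Y} (hy : P y = 0) : Q y ≤ klDiv P Q := by
  rw [klDiv_eq_sum_add_sub hsum]
  have h := single_le_sum (fun y _ => klDiv_summand_add_sub_nonneg (hP y) (hQ y) (hPQ y))
    (mem_univ y)
  simpa [hy] using h

end klDiv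

namespace IsCoupling

variable {X : Type*} [Fintype X] {μ : X → ℝ} {P : X × X → ℝ}

lemma nonneg (hP : IsCoupling μ P) (p : X × X) : 0 ≤ P p := hP.1 p

lemma marginal_nonneg (hP : IsCoupling μ P) (x : X) : 0 ≤ μ x :=
  hP.2.1 x ▸ sum_nonneg fun y _ => hP.nonneg (x, y)

lemma le_fst (hP : IsCoupling μ P) (p : X × X) : P p ≤ μ p.1 :=
  hP.2.1 p.1 ▸ single_le_sum (f := fun y => P (p.1, y)) (fun _ _ => hP.nonneg _) (mem_univ p.2)

lemma le_snd (hP : IsCoupling μ P) (p : X × X) : P p ≤ μ p.2 :=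
  hP.2.2 p.2 ▸ single_le_sum (f := fun x => P (x, p.2)) (fun _ _ => hP.nonneg _) (mem_univ p.1)

lemma eq_zero_of_mul_eq_zero (hP : IsCoupling μ P) {p : X × X} (h : μ p.1 * μ p.2 = 0) :
    P p = 0 := by
  rcases mul_eq_zero.1 h with h | h
  · exact le_antisymm (h ▸ hP.le_fst p) (hP.nonneg p)
  · exact le_antisymm (h ▸ hP.le_snd p) (hP.nonneg p)

lemma sum_eq (hP : IsCoupling μ P) : ∑ p, P p = ∑ x, μ x := by
  rw [Fintype.sum_prod_type]
  exact sum_congr rfl fun x _ => hP.2.1 x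

end IsCoupling

theorem stmt_10_general {X : Type*} [Fintype X] {d : ℕ}
    (μ : X → ℝ) (hμ1 : ∑ x, μ x = 1)
    (f : X → EuclideanSpace ℝ (Fin d))
    (x₁ x₂ : X) (hx₁ : 0 < μ x₁) (hx₂ : 0 < μ x₂) (hne : f x₁ ≠ f x₂)
    (ε : ℝ) (hε : 0 < ε) :
    ∀ P : X × X → ℝ, IsCoupling μ P →
      0 < (∑ p : X × X, P p * ((1 / 2) * ‖f p.1 - f p.2‖ ^ 2)) +
        ε * klDiv P (fun p => μ p.1 * μ p.2) := by
  intro P hP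
  have hQ : ∀ p : X × X, 0 ≤ μ p.1 * μ p.2 :=
    fun p => mul_nonneg (hP.marginal_nonneg _) (hP.marginal_nonneg _)
  have hac (p : X × X) : μ p.1 * μ p.2 = 0 → P p = 0 := hP.eq_zero_of_mul_eq_zero
  have hsum : ∑ p, P p = ∑ p : X × X, μ p.1 * μ p.2 := by
    rw [hP.sum_eq, Fintype.sum_prod_type, ← Fintype.sum_mul_sum, hμ1, one_mul]
  have hcost (p : X × X) : 0 ≤ P p * ((1 / 2) * ‖f p.1 - f p.2‖ ^ 2) :=
    mul_nonneg (hP.nonneg p) (by positivity)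
  rcases (hP.nonneg (x₁, x₂)).eq_or_lt with hzero | hpos
  · have hkl := le_klDiv_of_eq_zero hP.nonneg hQ hac hsum hzero.symm
    have := mul_pos hε (lt_of_lt_of_le (mul_pos hx₁ hx₂) hkl)
    linarith [sum_nonneg fun p (_ : p ∈ univ) => hcost p]
  · have hdist : 0 < ‖f x₁ - f x₂‖ := norm_pos_iff.2 (sub_ne_zero.2 hne)
    have hcost_pos := (mul_pos hpos (by positivity : (0 : ℝ) < 1 / 2 * ‖f x₁ - f x₂‖ ^ 2)).trans_le
      (single_le_sum (fun p _ => hcost p) (mem_univ (x₁, x₂)))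
    have := mul_nonneg hε.le (klDiv_nonneg hP.nonneg hQ hac hsum)
    linarith

/-- The entropy-regularized OT cost of transporting `f_*μ` to itself is strictly
positive whenever `f` is non-constant on the support of `μ`. -/
theorem stmt_10 {X : Type*} [Fintype X] {d : ℕ}
    (μ : X → ℝ) (hμ0 : ∀ x, 0 ≤ μ x) (hμ1 : ∑ x, μ x = 1)
    (f : X → EuclideanSpace ℝ (Fin d)) (hf : ∀ x, ‖f x‖ = 1)
    (x₁ x₂ : X) (hx₁ : 0 < μ x₁) (hx₂ : 0 < μ x₂) (hne : f x₁ ≠ f x₂)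
    (ε : ℝ) (hε : 0 < ε) :
    ∀ P : X × X → ℝ, IsCoupling μ P →
      0 < (∑ p : X × X, P p * ((1 / 2) * ‖f p.1 - f p.2‖ ^ 2)) +
        ε * klDiv P (fun p => μ p.1 * μ p.2) :=
  stmt_10_general μ hμ1 f x₁ x₂ hx₁ hx₂ hne ε hε
end

section
/- In the finite setting, the minimizer P* of E_P[c(x,y)] + ε·KL(P ‖ μ ⊗ μ) over all couplings P of (μ, μ) exists, is unique, and has the form P*(x,y) = exp((u(x) + v(y) − c(x,y))/ε)·μ(x)·μ(y) for some functions u, v : X → ℝ. -/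
/-- Entropy-regularized OT objective with cost `c`. -/
noncomputable def regCost {X : Type*} [Fintype X] (μ : X → ℝ) (c : X × X → ℝ)
    (ε : ℝ) (P : X × X → ℝ) : ℝ :=
  (∑ p : X × X, P p * c p) + ε * klDiv P (fun p => μ p.1 * μ p.2)

/-!
With the Gibbs kernel `K = exp (-c / ε) · μ ⊗ μ` the objective is `ε · KL(P ‖ K)`, a continuous,
strictly convex function on the compact convex set of couplings, so a minimiser exists and is
unique. It has full support: moving a distance `t` towards `μ ⊗ μ` changes KL by `O(t)`, except
that every vanishing entry contributes an extra `t log t`, which wins for small `t`. At a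
full-support minimiser the first variation along the zero-marginal directions
`(δₓ - δₓ') ⊗ (δ_y - δ_y')` vanishes, so `log (P / K)` has vanishing rectangle sums and splits
as `u x + v y`.
-/

open Real Filter Topology

namespace Real

lemma mul_log_div_eq_sub (x : ℝ) {k : ℝ} (hk : k ≠ 0) :
    x * log (x / k) = x * log x - x * log k := by
  rcases eq_or_ne x 0 with rfl | hx
  · simp
  · rw [log_div hx hk]; ring

lemma mul_mul_log_div (b : ℝ) {t k : ℝ} (ht : t ≠ 0) (hk : k ≠ 0) :
    t * b * log (t * b / k) = t * (b * log (b / k)) + t * b * log t := by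
  rcases eq_or_ne b 0 with rfl | hb
  · simp
  · rw [mul_div_assoc, log_mul ht (div_ne_zero hb hk)]; ring

lemma strictConvexOn_mul_log_div {k : ℝ} (hk : k ≠ 0) :
    StrictConvexOn ℝ (Set.Ici 0) fun x => x * log (x / k) := by
  refine ⟨convex_Ici 0, fun x hx y hy hxy a b ha hb hab => ?_⟩
  have h := strictConvexOn_mul_log.2 hx hy hxy ha hb hab
  simp only [smul_eq_mul, mul_log_div_eq_sub _ hk] at h ⊢
  linear_combination h

lemma continuous_mul_log_div (k : ℝ) : Continuous fun x => x * log (x / k) := by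
  rcases eq_or_ne k 0 with rfl | hk
  · simpa using continuous_const
  · simp only [mul_log_div_eq_sub _ hk]; fun_prop

lemma hasDerivAt_mul_log_div {x k : ℝ} (hx : x ≠ 0) (hk : k ≠ 0) :
    HasDerivAt (fun x => x * log (x / k)) (log (x / k) + 1) x := by
  simp only [mul_log_div_eq_sub _ hk, log_div hx hk]
  exact ((hasDerivAt_mul_log hx).fun_sub ((hasDerivAt_id' x).mul_const (log k))).congr_deriv
    (by ring)

end Real

lemma exists_eq_add_of_add_eq_add {X Y G : Type*} [AddCommGroup G] {g : X × Y → G}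
    (h : ∀ x x' y y', g (x, y) + g (x', y') = g (x, y') + g (x', y)) :
    ∃ (u : X → G) (v : Y → G), ∀ x y, g (x, y) = u x + v y := by
  rcases isEmpty_or_nonempty (X × Y) with _ | ⟨⟨x₀, y₀⟩⟩
  · exact ⟨0, 0, fun x y => isEmptyElim (x, y)⟩
  · refine ⟨fun x => g (x, y₀) - g (x₀, y₀), fun y => g (x₀, y), fun x y => ?_⟩
    rw [sub_add_eq_add_sub, ← h x x₀ y y₀, add_sub_cancel_right]

section klDiv

variable {Y : Type*} [Fintype Y]

lemma klDiv_eq_sum (P K : Y → ℝ) : klDiv P K = ∑ y, P y * log (P y / K y) :=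
  Finset.sum_congr rfl fun y _ => by split_ifs with h <;> simp [h]

lemma continuous_klDiv_left (K : Y → ℝ) : Continuous fun P : Y → ℝ => klDiv P K := by
  simp only [klDiv_eq_sum]
  exact continuous_finsetSum _ fun y _ => (continuous_mul_log_div (K y)).comp (continuous_apply y)

lemma strictConvexOn_klDiv_left {K : Y → ℝ} (hK : ∀ y, K y ≠ 0) :
    StrictConvexOn ℝ (Set.Ici 0) fun P : Y → ℝ => klDiv P K := by
  refine ⟨convex_Ici 0, fun P hP R hR hPR a b ha hb hab => ?_⟩
  obtain ⟨y, hy⟩ := Function.ne_iff.1 hPR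
  simp only [klDiv_eq_sum, smul_eq_mul, Finset.mul_sum, ← Finset.sum_add_distrib]
  refine Finset.sum_lt_sum (fun z _ => ?_) ⟨y, Finset.mem_univ y, ?_⟩
  · exact (strictConvexOn_mul_log_div (hK z)).convexOn.2 (hP z) (hR z) ha.le hb.le hab
  · exact (strictConvexOn_mul_log_div (hK y)).2 (hP y) (hR y) hy ha hb hab

lemma klDiv_segment_le {K P R : Y → ℝ} (hK : ∀ y, K y ≠ 0) (hP : 0 ≤ P) (hR : 0 ≤ R)
    {t : ℝ} (ht0 : 0 < t) (ht1 : t ≤ 1) {y : Y} (hy : P y = 0) :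
    klDiv ((1 - t) • P + t • R) K ≤ (1 - t) * klDiv P K + t * klDiv R K + t * R y * log t := by
  set h : Y → ℝ → ℝ := fun z x => x * log (x / K z)
  set gap : Y → ℝ := fun z => (1 - t) * h z (P z) + t * h z (R z) - h z ((1 - t) * P z + t * R z)
  have hgap : ∀ z, 0 ≤ gap z := fun z => sub_nonneg.2 <|
    (strictConvexOn_mul_log_div (hK z)).convexOn.2 (hP z) (hR z) (by linarith) ht0.le (by ring)
  have hgap_y : gap y = -(t * R y * log t) := by
    simp only [gap, h, hy, mul_zero, zero_mul, zero_add]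
    rw [mul_mul_log_div _ ht0.ne' (hK y)]
    ring
  have := Finset.single_le_sum (fun z _ => hgap z) (Finset.mem_univ y)
  simp only [gap, Finset.sum_sub_distrib, Finset.sum_add_distrib, ← Finset.mul_sum] at this
  simp only [klDiv_eq_sum, Pi.add_apply, Pi.smul_apply, smul_eq_mul]
  linarith

end klDiv

section coupling

variable {X : Type*} [Fintype X] {μ : X → ℝ}

lemma isCoupling_prod (hμ0 : ∀ x, 0 ≤ μ x) (hμ1 : ∑ x, μ x = 1) :
    IsCoupling μ fun p => μ p.1 * μ p.2 :=
  ⟨fun p => mul_nonneg (hμ0 p.1) (hμ0 p.2), fun x => by simp [← Finset.mul_sum, hμ1],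
    fun y => by simp [← Finset.sum_mul, hμ1]⟩

lemma convex_setOf_isCoupling : Convex ℝ {P : X × X → ℝ | IsCoupling μ P} := by
  rintro P ⟨hP0, hP1, hP2⟩ Q ⟨hQ0, hQ1, hQ2⟩ a b ha hb hab
  refine ⟨fun p => ?_, fun x => ?_, fun y => ?_⟩
  · simp only [Pi.add_apply, Pi.smul_apply, smul_eq_mul]
    exact add_nonneg (mul_nonneg ha (hP0 p)) (mul_nonneg hb (hQ0 p))
  · simp [Finset.sum_add_distrib, ← Finset.mul_sum, hP1, hQ1, ← add_mul, hab]
  · simp [Finset.sum_add_distrib, ← Finset.mul_sum, hP2, hQ2, ← add_mul, hab]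

lemma isCompact_setOf_isCoupling : IsCompact {P : X × X → ℝ | IsCoupling μ P} := by
  have hclosed : IsClosed {P : X × X → ℝ | IsCoupling μ P} := by
    simp only [IsCoupling, Set.ofPred_and, Set.ofPred_forall]
    refine .inter (isClosed_iInter fun p => isClosed_le continuous_const (continuous_apply p))
      (.inter ?_ ?_) <;>
      exact isClosed_iInter fun x => isClosed_eq (by fun_prop) continuous_const
  refine (isCompact_Icc (b := fun p => μ p.1)).of_isClosed_subset hclosed
    fun P ⟨hP0, hP1, _⟩ => ⟨hP0, fun p => ?_⟩
  calc P p ≤ ∑ y, P (p.1, y) :=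
        Finset.single_le_sum (fun y _ => hP0 (p.1, y)) (Finset.mem_univ p.2)
    _ = μ p.1 := hP1 p.1

end coupling

section klProjection

variable {X : Type*} [Fintype X] {μ : X → ℝ} {K P : X × X → ℝ}

lemma exists_isMinOn_klDiv {q : X × X → ℝ} (hq : IsCoupling μ q) (K : X × X → ℝ) :
    ∃ P ∈ {P | IsCoupling μ P}, IsMinOn (fun P => klDiv P K) {P | IsCoupling μ P} P :=
  isCompact_setOf_isCoupling.exists_isMinOn ⟨q, hq⟩ (continuous_klDiv_left K).continuousOn

lemma pos_of_isMinOn_klDiv (hK : ∀ p, K p ≠ 0) {q : X × X → ℝ} (hq : IsCoupling μ q)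
    (hq_pos : ∀ p, 0 < q p) (hP : IsCoupling μ P)
    (hmin : IsMinOn (fun P => klDiv P K) {P | IsCoupling μ P} P) (p : X × X) : 0 < P p := by
  refine (hP.1 p).lt_of_ne' fun hp => ?_
  obtain ⟨t, hlog, ht0, ht1⟩ :
      ∃ t, klDiv q K - klDiv P K + q p * log t < 0 ∧ t ∈ Set.Ioo (0 : ℝ) 1 := by
    have hlim : Tendsto (fun t => klDiv q K - klDiv P K + q p * log t) (𝓝[>] 0) atBot :=
      tendsto_atBot_add_const_left _ _ (tendsto_log_nhdsGT_zero.const_mul_atBot (hq_pos p))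
    exact ((hlim.eventually (eventually_lt_atBot 0)).and (Ioo_mem_nhdsGT one_pos)).exists
  have hseg := klDiv_segment_le hK hP.1 hq.1 ht0 ht1.le hp
  have hle : klDiv P K ≤ klDiv ((1 - t) • P + t • q) K :=
    hmin (convex_setOf_isCoupling hP hq (by linarith) ht0.le (by ring))
  linarith [mul_neg_of_pos_of_neg ht0 hlog]

lemma sum_mul_log_div_eq_zero_of_isMinOn (hK : ∀ p, K p ≠ 0) (hP : IsCoupling μ P)
    (hP_pos : ∀ p, 0 < P p) (hmin : IsMinOn (fun P => klDiv P K) {P | IsCoupling μ P} P)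
    {D : X × X → ℝ} (hrow : ∀ x, ∑ y, D (x, y) = 0) (hcol : ∀ y, ∑ x, D (x, y) = 0) :
    ∑ p, D p * log (P p / K p) = 0 := by
  have hline : ∀ p, HasDerivAt (fun s : ℝ => P p + s * D p) (D p) 0 := fun p => by
    simpa using ((hasDerivAt_id' (0 : ℝ)).mul_const (D p)).const_add (P p)
  have hcoupling : ∀ᶠ s in 𝓝 (0 : ℝ), IsCoupling μ (P + s • D) := by
    have hpos : ∀ᶠ s in 𝓝 (0 : ℝ), ∀ p, 0 < P p + s * D p := Filter.eventually_all.2 fun p =>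
      (hline p).continuousAt.eventually (lt_mem_nhds (by simpa using hP_pos p))
    filter_upwards [hpos] with s hs
    refine ⟨fun p => (hs p).le, fun x => ?_, fun y => ?_⟩
    · simp [Finset.sum_add_distrib, ← Finset.mul_sum, hP.2.1, hrow]
    · simp [Finset.sum_add_distrib, ← Finset.mul_sum, hP.2.2, hcol]
  have hloc : IsLocalMin (fun s : ℝ => klDiv (P + s • D) K) 0 := by
    filter_upwards [hcoupling] with s hs
    simpa using hmin hs
  have hderiv : HasDerivAt (fun s : ℝ => klDiv (P + s • D) K)
      (∑ p, (log (P p / K p) + 1) * D p) 0 := by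
    simp only [klDiv_eq_sum, Pi.add_apply, Pi.smul_apply, smul_eq_mul]
    exact HasDerivAt.fun_sum fun p _ =>
      (hasDerivAt_mul_log_div (hP_pos p).ne' (hK p)).comp_of_eq 0 (hline p) (by simp)
  have hD : ∑ p, D p = 0 := by simp [Fintype.sum_prod_type, hrow]
  have h := hloc.hasDerivAt_eq_zero hderiv
  simp only [add_mul, one_mul, Finset.sum_add_distrib, hD, add_zero] at h
  simpa only [mul_comm] using h

lemma exists_eq_exp_add_mul_of_isMinOn (hK : ∀ p, 0 < K p) (hP : IsCoupling μ P)
    (hP_pos : ∀ p, 0 < P p)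
    (hmin : IsMinOn (fun P => klDiv P K) {P | IsCoupling μ P} P) :
    ∃ u v : X → ℝ, ∀ x y, P (x, y) = exp (u x + v y) * K (x, y) := by
  classical
  obtain ⟨u, v, huv⟩ := exists_eq_add_of_add_eq_add (g := fun p => log (P p / K p))
    fun x x' y y' => by
      set a : X → ℝ := Pi.single x 1 - Pi.single x' 1
      set b : X → ℝ := Pi.single y 1 - Pi.single y' 1
      have h := sum_mul_log_div_eq_zero_of_isMinOn (fun p => (hK p).ne') hP hP_pos hmin
        (D := fun p => a p.1 * b p.2) (fun _ => by simp [b, ← Finset.mul_sum])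
        (fun _ => by simp [a, ← Finset.sum_mul])
      simp only [a, b, Pi.sub_apply, Pi.single_apply, mul_sub, sub_mul, mul_ite, ite_mul, mul_one,
        one_mul, mul_zero, zero_mul, Finset.sum_sub_distrib, Fintype.sum_prod_type,
        Finset.sum_ite_eq', Finset.mem_univ, if_true] at h
      linear_combination h
  refine ⟨u, v, fun x y => ?_⟩
  rw [← huv, exp_log (div_pos (hP_pos _) (hK _)), div_mul_cancel₀ _ (hK _).ne']

end klProjection

noncomputable def gibbsKernel {X : Type*} (μ : X → ℝ) (c : X × X → ℝ) (ε : ℝ) : X × X → ℝ :=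
  fun p => exp (-c p / ε) * (μ p.1 * μ p.2)

lemma regCost_eq_mul_klDiv_gibbsKernel {X : Type*} [Fintype X] {μ : X → ℝ}
    (hμ : ∀ x, μ x ≠ 0) (c : X × X → ℝ) {ε : ℝ} (hε : ε ≠ 0) (P : X × X → ℝ) :
    regCost μ c ε P = ε * klDiv P (gibbsKernel μ c ε) := by
  rw [regCost, klDiv_eq_sum, klDiv_eq_sum, Finset.mul_sum, Finset.mul_sum,
    ← Finset.sum_add_distrib]
  refine Finset.sum_congr rfl fun p _ => ?_
  rcases eq_or_ne (P p) 0 with hp | hp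
  · simp [hp]
  · rw [gibbsKernel, mul_comm (exp _), ← div_div (P p) (μ p.1 * μ p.2),
      log_div (div_ne_zero hp (mul_ne_zero (hμ _) (hμ _))) (exp_ne_zero _), log_exp]
    field_simp
    ring

theorem stmt_11_general {X : Type*} [Fintype X]
    (μ : X → ℝ) (hμ1 : ∑ x, μ x = 1) (hμpos : ∀ x, 0 < μ x)
    (c : X × X → ℝ) (ε : ℝ) (hε : 0 < ε) :
    ∃ Pstar : X × X → ℝ,
      IsCoupling μ Pstar ∧
      (∀ P : X × X → ℝ, IsCoupling μ P → regCost μ c ε Pstar ≤ regCost μ c ε P) ∧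
      (∀ Q : X × X → ℝ, IsCoupling μ Q →
        (∀ P : X × X → ℝ, IsCoupling μ P → regCost μ c ε Q ≤ regCost μ c ε P) →
        Q = Pstar) ∧
      ∃ u v : X → ℝ, ∀ x y : X,
        Pstar (x, y) = Real.exp ((u x + v y - c (x, y)) / ε) * μ x * μ y := by
  set K := gibbsKernel μ c ε
  have hK : ∀ p, 0 < K p := fun p => mul_pos (exp_pos _) (mul_pos (hμpos _) (hμpos _))
  have hreg : regCost μ c ε = fun P => ε * klDiv P K :=
    funext (regCost_eq_mul_klDiv_gibbsKernel (fun x => (hμpos x).ne') c hε.ne')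
  simp only [hreg, mul_le_mul_iff_right₀ hε]
  have hprod := isCoupling_prod (fun x => (hμpos x).le) hμ1
  obtain ⟨P, hP, hmin⟩ := exists_isMinOn_klDiv hprod K
  have hP_pos := pos_of_isMinOn_klDiv (fun p => (hK p).ne') hprod
    (fun p => mul_pos (hμpos p.1) (hμpos p.2)) hP hmin
  obtain ⟨u, v, huv⟩ := exists_eq_exp_add_mul_of_isMinOn hK hP hP_pos hmin
  have hstrict := (strictConvexOn_klDiv_left fun p => (hK p).ne').subset
    (fun P (hP : IsCoupling μ P) => hP.1) convex_setOf_isCoupling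
  refine ⟨P, hP, hmin, fun Q hQ hQmin => hstrict.eq_of_isMinOn hQmin hmin hQ hP,
    fun x => ε * u x, fun y => ε * v y, fun x y => ?_⟩
  have hexp : (ε * u x + ε * v y - c (x, y)) / ε = u x + v y + -c (x, y) / ε := by
    field_simp
    ring
  rw [huv, hexp, exp_add (u x + v y)]
  simp only [K, gibbsKernel]
  ring

/-- Existence, uniqueness and Sinkhorn/Gibbs form of the entropic OT minimizer. -/
theorem stmt_11 {X : Type*} [Fintype X] [Nonempty X]
    (μ : X → ℝ) (hμ0 : ∀ x, 0 ≤ μ x) (hμ1 : ∑ x, μ x = 1) (hμpos : ∀ x, 0 < μ x)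
    (c : X × X → ℝ) (ε : ℝ) (hε : 0 < ε) :
    ∃ Pstar : X × X → ℝ,
      IsCoupling μ Pstar ∧
      (∀ P : X × X → ℝ, IsCoupling μ P → regCost μ c ε Pstar ≤ regCost μ c ε P) ∧
      (∀ Q : X × X → ℝ, IsCoupling μ Q →
        (∀ P : X × X → ℝ, IsCoupling μ P → regCost μ c ε Q ≤ regCost μ c ε P) →
        Q = Pstar) ∧
      ∃ u v : X → ℝ, ∀ x y : X,
        Pstar (x, y) = Real.exp ((u x + v y - c (x, y)) / ε) * μ x * μ y :=
  stmt_11_general μ hμ1 hμpos c ε hε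
end
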